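/- arXiv:1607.06661 — 2 statements merged into one kernel-verified Lean document; each statement's English description precedes it below -/
import Mathlib

section
/- Let D ⊆ ℂ be open and let Φ, Φ⁺ : D → Matrix (Fin N) (Fin N) ℂ be real-differentiable matrix functions and B : D → Matrix (Fin N) (Fin N) ℂ such that ∂_z̄ Φ + B·conj(Φ) = 0 and ∂_z Φ⁺ − conj(Φ⁺)·B = 0 on D. Then the matrix identity ∂_z (Φ⁺ · conj(Φ)) = − ∂_z̄ (conj(Φ⁺) · Φ) holds on D (i.e. the matrix-valued 1-form Φ⁺·conj(Φ) dz̄ − conj(Φ⁺)·Φ dz is closed). -/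
open Complex Matrix

/-- Entrywise Wirtinger derivative ∂_z f = (1/2)(∂f/∂x − i ∂f/∂y). -/
noncomputable def wDz {N : ℕ} (f : ℂ → Matrix (Fin N) (Fin N) ℂ) (z : ℂ) :
    Matrix (Fin N) (Fin N) ℂ :=
  Matrix.of fun i j =>
    (1 / 2 : ℂ) * (fderiv ℝ (fun w => f w i j) z 1
      - Complex.I * fderiv ℝ (fun w => f w i j) z Complex.I)

/-- Entrywise Wirtinger derivative ∂_z̄ f = (1/2)(∂f/∂x + i ∂f/∂y). -/
noncomputable def wDzbar {N : ℕ} (f : ℂ → Matrix (Fin N) (Fin N) ℂ) (z : ℂ) :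
    Matrix (Fin N) (Fin N) ℂ :=
  Matrix.of fun i j =>
    (1 / 2 : ℂ) * (fderiv ℝ (fun w => f w i j) z 1
      + Complex.I * fderiv ℝ (fun w => f w i j) z Complex.I)

/-- Real-differentiability, entrywise, at every point of `D`. -/
def MatDiffOn {N : ℕ} (f : ℂ → Matrix (Fin N) (Fin N) ℂ) (D : Set ℂ) : Prop :=
  ∀ z ∈ D, ∀ i j, DifferentiableAt ℝ (fun w => f w i j) z

/-- Entrywise complex conjugate of a matrix. -/
def mconj {N : ℕ} (M : Matrix (Fin N) (Fin N) ℂ) : Matrix (Fin N) (Fin N) ℂ :=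
  M.map (starRingEnd ℂ)

/-!
Both sides are computed with the Leibniz rule. Conjugation exchanges `∂_z` and `∂_z̄`, so
`∂_z conj Φ = conj (∂_z̄ Φ) = -conj B · Φ` and `∂_z̄ conj Φ⁺ = conj (∂_z Φ⁺) = Φ⁺ · conj B`;
after substituting the two equations, the terms `Φ⁺ · conj B · Φ` cancel.
-/

open ComplexConjugate

/-- `wirtinger (-I)` is `∂_z` and `wirtinger I` is `∂_z̄`. -/
noncomputable def wirtinger (c : ℂ) (u : ℂ → ℂ) (z : ℂ) : ℂ :=
  (1 / 2 : ℂ) * (fderiv ℝ u z 1 + c * fderiv ℝ u z I)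

section Scalar

variable {c : ℂ} {u v : ℂ → ℂ} {z : ℂ}

lemma wirtinger_mul (hu : DifferentiableAt ℝ u z) (hv : DifferentiableAt ℝ v z) :
    wirtinger c (fun w => u w * v w) z = wirtinger c u z * v z + u z * wirtinger c v z := by
  simp only [wirtinger, fderiv_fun_mul hu hv, _root_.add_apply,
    _root_.smul_apply, smul_eq_mul]
  ring

lemma wirtinger_sum {ι : Type*} (s : Finset ι) {u : ι → ℂ → ℂ}
    (h : ∀ k ∈ s, DifferentiableAt ℝ (u k) z) :
    wirtinger c (fun w => ∑ k ∈ s, u k w) z = ∑ k ∈ s, wirtinger c (u k) z := by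
  simp only [wirtinger, fderiv_fun_sum h, _root_.sum_apply, Finset.mul_sum,
    ← Finset.sum_add_distrib]

lemma wirtinger_conj (hu : DifferentiableAt ℝ u z) :
    wirtinger c (fun w => conj (u w)) z = conj (wirtinger (conj c) u z) := by
  have h : fderiv ℝ (fun w => conj (u w)) z = conjCLE.toContinuousLinearMap.comp (fderiv ℝ u z) :=
    (conjCLE.toContinuousLinearMap.hasFDerivAt.comp z hu.hasFDerivAt).fderiv
  simp only [wirtinger, h, ContinuousLinearMap.comp_apply, ContinuousLinearEquiv.coe_coe,
    conjCLE_apply, map_mul, map_add, conj_conj, map_div₀, map_one, map_ofNat]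

end Scalar

noncomputable def matWirtinger {N : ℕ} (c : ℂ) (f : ℂ → Matrix (Fin N) (Fin N) ℂ) (z : ℂ) :
    Matrix (Fin N) (Fin N) ℂ :=
  Matrix.of fun i j => wirtinger c (fun w => f w i j) z

lemma wDz_eq_matWirtinger {N : ℕ} (f : ℂ → Matrix (Fin N) (Fin N) ℂ) (z : ℂ) :
    wDz f z = matWirtinger (-I) f z := by
  ext i j
  simp only [wDz, matWirtinger, wirtinger, of_apply]
  ring

lemma wDzbar_eq_matWirtinger {N : ℕ} (f : ℂ → Matrix (Fin N) (Fin N) ℂ) (z : ℂ) :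
    wDzbar f z = matWirtinger I f z :=
  rfl

lemma mconj_mul {N : ℕ} (A C : Matrix (Fin N) (Fin N) ℂ) :
    mconj (A * C) = mconj A * mconj C :=
  Matrix.map_mul

lemma mconj_mconj {N : ℕ} (A : Matrix (Fin N) (Fin N) ℂ) : mconj (mconj A) = A := by
  ext i j
  simp [mconj]

lemma mconj_neg {N : ℕ} (A : Matrix (Fin N) (Fin N) ℂ) : mconj (-A) = -mconj A := by
  ext i j
  simp [mconj]

section Matrix

variable {N : ℕ} {c : ℂ} {f g : ℂ → Matrix (Fin N) (Fin N) ℂ} {z : ℂ}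

lemma differentiableAt_mconj (hf : ∀ i j, DifferentiableAt ℝ (fun w => f w i j) z) (i j : Fin N) :
    DifferentiableAt ℝ (fun w => mconj (f w) i j) z :=
  conjCLE.toContinuousLinearMap.differentiableAt.comp z (hf i j)

lemma matWirtinger_mul (hf : ∀ i j, DifferentiableAt ℝ (fun w => f w i j) z)
    (hg : ∀ i j, DifferentiableAt ℝ (fun w => g w i j) z) :
    matWirtinger c (fun w => f w * g w) z = matWirtinger c f z * g z + f z * matWirtinger c g z := by
  ext i j
  simp only [matWirtinger, of_apply, Matrix.add_apply, mul_apply,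
    wirtinger_sum _ fun k _ => (hf i k).fun_mul (hg k j), ← Finset.sum_add_distrib]
  exact Finset.sum_congr rfl fun k _ => wirtinger_mul (hf i k) (hg k j)

lemma matWirtinger_mconj (hf : ∀ i j, DifferentiableAt ℝ (fun w => f w i j) z) :
    matWirtinger c (fun w => mconj (f w)) z = mconj (matWirtinger (conj c) f z) := by
  ext i j
  exact wirtinger_conj (hf i j)

end Matrix

theorem moutard_closedness_general {N : ℕ} (D : Set ℂ)
    (Φ Φp B : ℂ → Matrix (Fin N) (Fin N) ℂ)
    (hΦ : MatDiffOn Φ D) (hΦp : MatDiffOn Φp D)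
    (hsys : ∀ z ∈ D, wDzbar Φ z + B z * mconj (Φ z) = 0)
    (hconj : ∀ z ∈ D, wDz Φp z - mconj (Φp z) * B z = 0) :
    ∀ z ∈ D, wDz (fun w => Φp w * mconj (Φ w)) z
      = - wDzbar (fun w => mconj (Φp w) * Φ w) z := by
  intro z hz
  have hΦbar : matWirtinger I Φ z = -(B z * mconj (Φ z)) :=
    eq_neg_of_add_eq_zero_left (hsys z hz)
  have hΦpz : matWirtinger (-I) Φp z = mconj (Φp z) * B z := by
    rw [← wDz_eq_matWirtinger]
    exact sub_eq_zero.mp (hconj z hz)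
  rw [wDz_eq_matWirtinger, wDzbar_eq_matWirtinger,
    matWirtinger_mul (hΦp z hz) (differentiableAt_mconj (hΦ z hz)),
    matWirtinger_mul (differentiableAt_mconj (hΦp z hz)) (hΦ z hz),
    matWirtinger_mconj (hΦ z hz), matWirtinger_mconj (hΦp z hz), conj_neg_I, conj_I,
    hΦbar, hΦpz, mconj_neg, mconj_mul, mconj_mul, mconj_mconj, mconj_mconj]
  simp only [mul_neg, neg_add, neg_neg, mul_assoc]
  abel

/-- if ∂_z̄ Φ + B·conj Φ = 0 and ∂_z Φ⁺ − conj(Φ⁺)·B = 0 on an open set D,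
then ∂_z (Φ⁺ · conj Φ) = − ∂_z̄ (conj(Φ⁺) · Φ) on D. -/
theorem moutard_closedness {N : ℕ} (D : Set ℂ) (hD : IsOpen D)
    (Φ Φp B : ℂ → Matrix (Fin N) (Fin N) ℂ)
    (hΦ : MatDiffOn Φ D) (hΦp : MatDiffOn Φp D)
    (hsys : ∀ z ∈ D, wDzbar Φ z + B z * mconj (Φ z) = 0)
    (hconj : ∀ z ∈ D, wDz Φp z - mconj (Φp z) * B z = 0) :
    ∀ z ∈ D, wDz (fun w => Φp w * mconj (Φ w)) z
      = - wDzbar (fun w => mconj (Φp w) * Φ w) z :=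
  moutard_closedness_general D Φ Φp B hΦ hΦp hsys hconj
end

section
/- (Proposition 1: Moutard type transformation for the system with B = 0.) Let D ⊆ ℂ be open, let A, Ψ, F, F⁺, ω̂_{F,F⁺}, ω̂_{Ψ,F⁺} : D → Matrix (Fin N) (Fin N) ℂ be real-differentiable, and assume on D: (i) ∂_z̄ Ψ + A·Ψ = 0 and ∂_z̄ F + A·F = 0; (ii) ∂_z̄ ω̂_{F,F⁺} = F⁺·F and ∂_z̄ ω̂_{Ψ,F⁺} = F⁺·Ψ; (iii) ω̂_{F,F⁺}(z) is invertible for every z ∈ D. Define Ψ̃ = Ψ − F · ω̂_{F,F⁺}⁻¹ · ω̂_{Ψ,F⁺} and Ã = A + F · ω̂_{F,F⁺}⁻¹ · F⁺. Then ∂_z̄ Ψ̃ + Ã·Ψ̃ = 0 on D. -/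
open Complex Matrix

/-! `∂_z̄` obeys the Leibniz rule on entrywise real-differentiable matrix functions. As `det` is
continuous, `ω̂_{F,F⁺}` stays invertible near each point of `D`, so differentiating
`ω̂_{F,F⁺} ω̂_{F,F⁺}⁻¹ = 1` gives `∂_z̄ ω̂_{F,F⁺}⁻¹ = -ω̂_{F,F⁺}⁻¹ F⁺ F ω̂_{F,F⁺}⁻¹`. Substituting this and
the equations for `Ψ`, `F`, `ω̂_{Ψ,F⁺}` into the Leibniz expansion of `∂_z̄ Ψ̃` yields exactly `-Ã Ψ̃`:
with `G = ω̂_{F,F⁺}⁻¹`, both are `-AΨ + AFGω̂_{Ψ,F⁺} + FGF⁺FGω̂_{Ψ,F⁺} - FGF⁺Ψ`. -/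

open Topology

noncomputable def wirtingerBar (f : ℂ → ℂ) (z : ℂ) : ℂ :=
  (1 / 2 : ℂ) * (fderiv ℝ f z 1 + I * fderiv ℝ f z I)

section wirtingerBar

variable {f g : ℂ → ℂ} {z : ℂ}

theorem wirtingerBar_sub (hf : DifferentiableAt ℝ f z) (hg : DifferentiableAt ℝ g z) :
    wirtingerBar (fun w => f w - g w) z = wirtingerBar f z - wirtingerBar g z := by
  simp only [wirtingerBar, fderiv_fun_sub hf hg, _root_.sub_apply]
  ring

theorem wirtingerBar_mul (hf : DifferentiableAt ℝ f z) (hg : DifferentiableAt ℝ g z) :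
    wirtingerBar (fun w => f w * g w) z = wirtingerBar f z * g z + f z * wirtingerBar g z := by
  simp only [wirtingerBar, fderiv_fun_mul hf hg, _root_.add_apply, _root_.smul_apply,
    smul_eq_mul]
  ring

theorem wirtingerBar_sum {ι : Type*} (s : Finset ι) {f : ι → ℂ → ℂ}
    (hf : ∀ i ∈ s, DifferentiableAt ℝ (f i) z) :
    wirtingerBar (fun w => ∑ i ∈ s, f i w) z = ∑ i ∈ s, wirtingerBar (f i) z := by
  simp only [wirtingerBar, fderiv_fun_sum hf, _root_.sum_apply, Finset.mul_sum,
    ← Finset.sum_add_distrib]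

theorem Filter.EventuallyEq.wirtingerBar_eq (h : f =ᶠ[𝓝 z] g) :
    wirtingerBar f z = wirtingerBar g z := by
  rw [wirtingerBar, wirtingerBar, h.fderiv_eq]

end wirtingerBar

def MatDiffAt {N : ℕ} (f : ℂ → Matrix (Fin N) (Fin N) ℂ) (z : ℂ) : Prop :=
  ∀ i j, DifferentiableAt ℝ (fun w => f w i j) z

section MatDiffAt

variable {N : ℕ} {f g : ℂ → Matrix (Fin N) (Fin N) ℂ} {z : ℂ}

theorem MatDiffAt.mul (hf : MatDiffAt f z) (hg : MatDiffAt g z) :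
    MatDiffAt (fun w => f w * g w) z := by
  intro i j
  simp only [mul_apply]
  exact .fun_sum fun k _ => (hf i k).mul (hg k j)

theorem MatDiffAt.differentiableAt_det (hf : MatDiffAt f z) :
    DifferentiableAt ℝ (fun w => (f w).det) z := by
  classical
  simp only [det_apply]
  exact .fun_sum fun σ _ => .const_smul
    (HasFDerivAt.finsetProd fun i _ => (hf (σ i) i).hasFDerivAt).differentiableAt _

theorem MatDiffAt.adjugate (hf : MatDiffAt f z) : MatDiffAt (fun w => (f w).adjugate) z := by
  intro i j
  simp only [adjugate_apply]
  refine MatDiffAt.differentiableAt_det fun k l => ?_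
  by_cases h : k = j
  · simp [h]
  · simpa [h] using hf k l

theorem MatDiffAt.inv (hf : MatDiffAt f z) (hz : IsUnit (f z).det) :
    MatDiffAt (fun w => (f w)⁻¹) z := by
  intro i j
  have hinv : (fun w => (f w)⁻¹ i j) = fun w => ((f w).det)⁻¹ * (f w).adjugate i j := by
    ext w
    rw [Matrix.inv_def, Matrix.smul_apply, Ring.inverse_eq_inv', smul_eq_mul]
  rw [hinv]
  exact (hf.differentiableAt_det.inv hz.ne_zero).fun_mul (hf.adjugate i j)

end MatDiffAt

section wDzbar

variable {N : ℕ} {f g : ℂ → Matrix (Fin N) (Fin N) ℂ} {z : ℂ}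

theorem wDzbar_apply (f : ℂ → Matrix (Fin N) (Fin N) ℂ) (z : ℂ) (i j : Fin N) :
    wDzbar f z i j = wirtingerBar (fun w => f w i j) z :=
  rfl

theorem wDzbar_const (c : Matrix (Fin N) (Fin N) ℂ) : wDzbar (fun _ => c) z = 0 := by
  ext i j
  simp [wDzbar_apply, wirtingerBar]

theorem Filter.EventuallyEq.wDzbar_eq (h : f =ᶠ[𝓝 z] g) : wDzbar f z = wDzbar g z := by
  ext i j
  exact Filter.EventuallyEq.wirtingerBar_eq (h.mono fun w hw => congrFun₂ hw i j)

theorem wDzbar_sub (hf : MatDiffAt f z) (hg : MatDiffAt g z) :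
    wDzbar (fun w => f w - g w) z = wDzbar f z - wDzbar g z := by
  ext i j
  exact wirtingerBar_sub (hf i j) (hg i j)

theorem wDzbar_mul (hf : MatDiffAt f z) (hg : MatDiffAt g z) :
    wDzbar (fun w => f w * g w) z = wDzbar f z * g z + f z * wDzbar g z := by
  ext i j
  simp only [wDzbar_apply, mul_apply, Matrix.add_apply, ← Finset.sum_add_distrib,
    wirtingerBar_sum _ fun k _ => (hf i k).fun_mul (hg k j)]
  exact Finset.sum_congr rfl fun k _ => wirtingerBar_mul (hf i k) (hg k j)

theorem wDzbar_inv (hf : MatDiffAt f z) (hz : IsUnit (f z)) :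
    wDzbar (fun w => (f w)⁻¹) z = -((f z)⁻¹ * wDzbar f z * (f z)⁻¹) := by
  have hdet : IsUnit (f z).det := (isUnit_iff_isUnit_det _).mp hz
  have hunits : ∀ᶠ w in 𝓝 z, IsUnit (f w).det := by
    filter_upwards [hf.differentiableAt_det.continuousAt.eventually_ne hdet.ne_zero]
      with w hw using hw.isUnit
  have hmul : wDzbar f z * (f z)⁻¹ + f z * wDzbar (fun w => (f w)⁻¹) z = 0 := by
    rw [← wDzbar_mul hf (hf.inv hdet), ← wDzbar_const (1 : Matrix (Fin N) (Fin N) ℂ)]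
    exact Filter.EventuallyEq.wDzbar_eq (hunits.mono fun w hw => mul_nonsing_inv _ hw)
  calc wDzbar (fun w => (f w)⁻¹) z
      = (f z)⁻¹ * (f z * wDzbar (fun w => (f w)⁻¹) z) := by
        rw [← mul_assoc, nonsing_inv_mul _ hdet, one_mul]
    _ = -((f z)⁻¹ * wDzbar f z * (f z)⁻¹) := by
        rw [eq_neg_of_add_eq_zero_right hmul, mul_neg, mul_assoc]

end wDzbar

theorem moutard_B_zero_general {N : ℕ} (D : Set ℂ)
    (A Ψ F Fp ωFF ωΨF : ℂ → Matrix (Fin N) (Fin N) ℂ)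
    (hΨ : MatDiffOn Ψ D) (hF : MatDiffOn F D)
    (hωFF : MatDiffOn ωFF D) (hωΨF : MatDiffOn ωΨF D)
    (hΨsys : ∀ z ∈ D, wDzbar Ψ z + A z * Ψ z = 0)
    (hFsys : ∀ z ∈ D, wDzbar F z + A z * F z = 0)
    (hωFFzbar : ∀ z ∈ D, wDzbar ωFF z = Fp z * F z)
    (hωΨFzbar : ∀ z ∈ D, wDzbar ωΨF z = Fp z * Ψ z)
    (hinv : ∀ z ∈ D, IsUnit (ωFF z)) :
    ∀ z ∈ D,
      wDzbar (fun w => Ψ w - F w * (ωFF w)⁻¹ * ωΨF w) z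
        + (A z + F z * (ωFF z)⁻¹ * Fp z)
          * (Ψ z - F z * (ωFF z)⁻¹ * ωΨF z) = 0 := by
  intro z hz
  have hωFFinv : MatDiffAt (fun w => (ωFF w)⁻¹) z :=
    MatDiffAt.inv (hωFF z hz) ((isUnit_iff_isUnit_det _).mp (hinv z hz))
  have hFω : MatDiffAt (fun w => F w * (ωFF w)⁻¹) z := MatDiffAt.mul (hF z hz) hωFFinv
  rw [wDzbar_sub (hΨ z hz) (hFω.mul (hωΨF z hz)), wDzbar_mul hFω (hωΨF z hz),
    wDzbar_mul (hF z hz) hωFFinv, wDzbar_inv (hωFF z hz) (hinv z hz),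
    eq_neg_of_add_eq_zero_left (hΨsys z hz), eq_neg_of_add_eq_zero_left (hFsys z hz),
    hωFFzbar z hz, hωΨFzbar z hz]
  noncomm_ring

/-- Proposition 1: Moutard type transformation for the system with B = 0:
Ψ̃ = Ψ − F·ω̂_{F,F⁺}⁻¹·ω̂_{Ψ,F⁺} satisfies ∂_z̄ Ψ̃ + Ã·Ψ̃ = 0 with
Ã = A + F·ω̂_{F,F⁺}⁻¹·F⁺. -/
theorem moutard_B_zero {N : ℕ} (D : Set ℂ) (hD : IsOpen D)
    (A Ψ F Fp ωFF ωΨF : ℂ → Matrix (Fin N) (Fin N) ℂ)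
    (hA : MatDiffOn A D) (hΨ : MatDiffOn Ψ D) (hF : MatDiffOn F D)
    (hFp : MatDiffOn Fp D) (hωFF : MatDiffOn ωFF D) (hωΨF : MatDiffOn ωΨF D)
    (hΨsys : ∀ z ∈ D, wDzbar Ψ z + A z * Ψ z = 0)
    (hFsys : ∀ z ∈ D, wDzbar F z + A z * F z = 0)
    (hωFFzbar : ∀ z ∈ D, wDzbar ωFF z = Fp z * F z)
    (hωΨFzbar : ∀ z ∈ D, wDzbar ωΨF z = Fp z * Ψ z)
    (hinv : ∀ z ∈ D, IsUnit (ωFF z)) :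
    ∀ z ∈ D,
      wDzbar (fun w => Ψ w - F w * (ωFF w)⁻¹ * ωΨF w) z
        + (A z + F z * (ωFF z)⁻¹ * Fp z)
          * (Ψ z - F z * (ωFF z)⁻¹ * ωΨF z) = 0 :=
  moutard_B_zero_general D A Ψ F Fp ωFF ωΨF hΨ hF hωFF hωΨF hΨsys hFsys hωFFzbar hωΨFzbar hinv
end
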